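/- With $S$, $S_h$, and the lift $\hat f$ of a function $f$ on $S$ to $S_h$ as above, for $f \in W^{1,p}(S)$ and $g \in W^{1,p^*}(S)$ (with $1/p + 1/p^* = 1$) there holds $\int_S \langle Df, Dg\rangle = \int_{S_h} \langle D\hat f, D\hat g\rangle + O(h^2)\,\|f\|_{W^{1,p}(S)}\|g\|_{W^{1,p^*}(S)}$; moreover for $f \in L^1(S)$, $\int_S f = \int_{S_h} \hat f + O(h^2)\|f\|_{L^1(S)}$. -/

import Mathlib

/-!
The integrands on `S` and `S_h` differ pointwise by `O(h²) |Df| |Dg|`: the coefficients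
`σ⁻¹ √det σ` and `g⁻¹ √det g` are `O(h²)`-close, because in dimension two uniform ellipticity
bounds `det σ` from below and `σ⁻¹` from above. The Euclidean norms `|Df|`, `|Dg|` are in turn
controlled by the `σ`-norms. Hölder's inequality is obtained by integrating Young's inequality
`ab ≤ tᵖaᵖ + b^q/t^q` and optimizing over `t` afterwards, which needs no measurability of `Df`,
`Dg` beyond the integrability assumptions.
-/

open MeasureTheory Filter Topology

namespace Real

variable {p q : ℝ}

theorem mul_le_rpow_mul_add_div_rpow (hpq : p.HolderConjugate q) {a b t : ℝ} (ha : 0 ≤ a)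
    (hb : 0 ≤ b) (ht : 0 < t) : a * b ≤ t ^ p * a ^ p + b ^ q / t ^ q := by
  have hyoung := young_inequality_of_nonneg (mul_nonneg ht.le ha) (div_nonneg hb ht.le) hpq
  rw [mul_rpow ht.le ha, div_rpow hb ht.le, show t * a * (b / t) = a * b by field_simp] at hyoung
  have h₁ : t ^ p * a ^ p / p ≤ t ^ p * a ^ p := div_le_self (by positivity) hpq.lt.le
  have h₂ : b ^ q / t ^ q / q ≤ b ^ q / t ^ q := div_le_self (by positivity) hpq.symm.lt.le
  linarith

theorem exists_rpow_mul_eq_div_rpow (hpq : p.HolderConjugate q) {X Y : ℝ} (hX : 0 < X)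
    (hY : 0 < Y) :
    ∃ t > 0, t ^ p * X = X ^ (1 / p) * Y ^ (1 / q) ∧ Y / t ^ q = X ^ (1 / p) * Y ^ (1 / q) := by
  have hsplit {Z : ℝ} (hZ : 0 < Z) : Z = Z ^ (1 / p) * Z ^ (1 / q) := by
    rw [← rpow_add hZ, hpq.one_div_add_one_div, div_one, rpow_one]
  have hp := hpq.ne_zero
  have hq := hpq.symm.ne_zero
  have hr : 0 < Y / X := div_pos hY hX
  refine ⟨(Y / X) ^ (1 / (p * q)), by positivity, ?_, ?_⟩
  · rw [← rpow_mul hr.le, show 1 / (p * q) * p = 1 / q by field_simp, div_rpow hY.le hX.le,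
      div_mul_eq_mul_div, div_eq_iff (by positivity)]
    linear_combination Y ^ (1 / q) * hsplit hX
  · rw [← rpow_mul hr.le, show 1 / (p * q) * q = 1 / p by field_simp, div_rpow hY.le hX.le,
      div_div_eq_mul_div, div_eq_iff (by positivity)]
    linear_combination X ^ (1 / p) * hsplit hY

/-- The zero cases `X = 0` or `Y = 0` are handled by perturbing `X, Y` to `X + ε, Y + ε`. -/
theorem le_two_mul_rpow_mul_rpow_of_forall (hpq : p.HolderConjugate q) {K L X Y : ℝ}
    (hK : 0 ≤ K) (hX : 0 ≤ X) (hY : 0 ≤ Y)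
    (hL : ∀ t > 0, L ≤ K * (t ^ p * X + Y / t ^ q)) :
    L ≤ 2 * K * X ^ (1 / p) * Y ^ (1 / q) := by
  have hperturbed : ∀ ε > 0, L ≤ 2 * K * (X + ε) ^ (1 / p) * (Y + ε) ^ (1 / q) := fun ε hε => by
    obtain ⟨t, ht, hXt, hYt⟩ := exists_rpow_mul_eq_div_rpow hpq (by positivity : 0 < X + ε)
      (by positivity : 0 < Y + ε)
    calc L ≤ K * (t ^ p * X + Y / t ^ q) := hL t ht
      _ ≤ K * (t ^ p * (X + ε) + (Y + ε) / t ^ q) := by gcongr <;> linarith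
      _ = 2 * K * (X + ε) ^ (1 / p) * (Y + ε) ^ (1 / q) := by rw [hXt, hYt]; ring
  have hcont : Tendsto (fun ε => 2 * K * (X + ε) ^ (1 / p) * (Y + ε) ^ (1 / q)) (𝓝[>] 0)
      (𝓝 (2 * K * X ^ (1 / p) * Y ^ (1 / q))) := by
    apply tendsto_nhdsWithin_of_tendsto_nhds
    have hp := hpq.one_div_nonneg
    have hq := hpq.symm.one_div_nonneg
    simpa using ((continuous_const.add continuous_id).rpow_const fun _ => Or.inr hp).tendsto 0
      |>.const_mul (2 * K) |>.mul
      (((continuous_const.add continuous_id).rpow_const fun _ => Or.inr hq).tendsto 0)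
  exact ge_of_tendsto hcont (eventually_nhdsWithin_of_forall hperturbed)

theorem sqrt_mul_sqrt_le_young (hpq : p.HolderConjugate q) {t lam s w w' : ℝ} (ht : 0 < t)
    (hlam : 0 < lam) (hs : lam ≤ s) (hw : 0 ≤ w) (hw' : 0 ≤ w') (a b : ℝ) :
    √w * √w' ≤
      (t ^ p * ((|a| ^ p + w ^ (p / 2)) * s) + (|b| ^ q + w' ^ (q / 2)) * s / t ^ q) / lam := by
  have hsqrt {r z : ℝ} (hz : 0 ≤ z) : √z ^ r = z ^ (r / 2) := by
    rw [sqrt_eq_rpow, ← rpow_mul hz, one_div_mul_eq_div]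
  have hweight {y z : ℝ} (hy : 0 ≤ y) (hz : 0 ≤ z) : z ≤ (y + z) * s / lam := by
    rw [le_div_iff₀ hlam]
    nlinarith
  have hyoung := mul_le_rpow_mul_add_div_rpow hpq (sqrt_nonneg w) (sqrt_nonneg w') ht
  rw [hsqrt hw, hsqrt hw'] at hyoung
  calc √w * √w' ≤ t ^ p * w ^ (p / 2) + w' ^ (q / 2) / t ^ q := hyoung
    _ ≤ t ^ p * ((|a| ^ p + w ^ (p / 2)) * s / lam) +
        (|b| ^ q + w' ^ (q / 2)) * s / lam / t ^ q := by
      gcongr <;> exact hweight (by positivity) (by positivity)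
    _ = _ := by ring

theorem abs_sqrt_sub_sqrt_le_div {x y lam : ℝ} (hlam : 0 < lam) (hx : lam ^ 2 ≤ x) :
    |√x - √y| ≤ |x - y| / lam := by
  have hsx : lam ≤ √x := le_sqrt_of_sq_le hx
  have hx₀ : 0 < x := (by positivity : (0 : ℝ) < lam ^ 2).trans_le hx
  rw [le_div_iff₀ hlam]
  rcases le_or_gt 0 y with hy | hy
  · calc |√x - √y| * lam ≤ |√x - √y| * (√x + √y) := by
          gcongr; exact le_add_of_le_of_nonneg hsx (sqrt_nonneg _)
      _ = |x - y| := by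
        rw [← abs_of_nonneg (add_nonneg (sqrt_nonneg x) (sqrt_nonneg y)), ← abs_mul]
        congr 1
        linear_combination sq_sqrt hx₀.le - sq_sqrt hy
  · rw [sqrt_eq_zero_of_nonpos hy.le, sub_zero, abs_of_nonneg (sqrt_nonneg _),
      abs_of_pos (by linarith)]
    nlinarith [sq_sqrt hx₀.le]

end Real

theorem abs_integral_le_of_forall_young {α : Type*} [MeasurableSpace α] {μ : Measure α}
    {p q K : ℝ} (hpq : p.HolderConjugate q) (hK : 0 ≤ K) {F P Q : α → ℝ}
    (hP : Integrable P μ) (hQ : Integrable Q μ) (hP₀ : 0 ≤ P) (hQ₀ : 0 ≤ Q)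
    (hF : ∀ t > 0, ∀ x, |F x| ≤ K * (t ^ p * P x + Q x / t ^ q)) :
    |∫ x, F x ∂μ| ≤ 2 * K * (∫ x, P x ∂μ) ^ (1 / p) * (∫ x, Q x ∂μ) ^ (1 / q) := by
  refine Real.le_two_mul_rpow_mul_rpow_of_forall hpq hK (integral_nonneg hP₀)
    (integral_nonneg hQ₀) fun t ht => ?_
  have hdom : Integrable (fun x => K * (t ^ p * P x + Q x / t ^ q)) μ :=
    ((hP.const_mul _).add (hQ.div_const _)).const_mul _
  calc |∫ x, F x ∂μ| = ‖∫ x, F x ∂μ‖ := (Real.norm_eq_abs _).symm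
    _ ≤ ∫ x, K * (t ^ p * P x + Q x / t ^ q) ∂μ :=
        norm_integral_le_of_norm_le hdom (ae_of_all _ (hF t ht))
    _ = K * (t ^ p * ∫ x, P x ∂μ + (∫ x, Q x ∂μ) / t ^ q) := by
        rw [integral_const_mul, integral_add (hP.const_mul _) (hQ.div_const _),
          integral_const_mul, integral_div]

namespace Matrix

def pairing {ι : Type*} [Fintype ι] (M : Matrix ι ι ℝ) (u v : ι → ℝ) : ℝ :=
  ∑ i, ∑ j, M i j * u i * v j

section pairing

variable {ι : Type*} [Fintype ι]

theorem abs_pairing_le {M : Matrix ι ι ℝ} {K : ℝ} (hM : ∀ i j, |M i j| ≤ K) (u v : ι → ℝ) :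
    |M.pairing u v| ≤ K * (∑ i, |u i|) * ∑ j, |v j| := by
  rw [mul_assoc, Finset.sum_mul_sum, Finset.mul_sum]
  refine (Finset.abs_sum_le_sum_abs _ _).trans (Finset.sum_le_sum fun i _ => ?_)
  rw [Finset.mul_sum]
  refine (Finset.abs_sum_le_sum_abs _ _).trans (Finset.sum_le_sum fun j _ => ?_)
  rw [abs_mul, abs_mul, ← mul_assoc]
  gcongr
  exact hM i j

theorem pairing_mul_sub_pairing_mul (M N : Matrix ι ι ℝ) (s s' : ℝ) (u v : ι → ℝ) :
    M.pairing u v * s - N.pairing u v * s' = pairing (fun i j => M i j * s - N i j * s') u v := by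
  simp only [pairing, Finset.sum_mul, ← Finset.sum_sub_distrib]
  congr! 2 with i _ j _
  ring

end pairing

variable {M : Matrix (Fin 2) (Fin 2) ℝ} {lam Lam : ℝ}

theorem pairing_fin_two (M : Matrix (Fin 2) (Fin 2) ℝ) (u v : Fin 2 → ℝ) :
    M.pairing u v =
      M 0 0 * u 0 * v 0 + M 0 1 * u 0 * v 1 + (M 1 0 * u 1 * v 0 + M 1 1 * u 1 * v 1) := by
  simp [pairing, Fin.sum_univ_two]

/-- The symmetric part of `M - lam` is positive semidefinite, so its discriminant is
nonpositive; and `det M` dominates the determinant of the symmetric part of `M`. -/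
theorem sq_le_det_of_coercive (hlam : 0 ≤ lam)
    (hM : ∀ ξ : Fin 2 → ℝ, lam * ∑ i, ξ i ^ 2 ≤ M.pairing ξ ξ) : lam ^ 2 ≤ M.det := by
  have h (x y : ℝ) := hM ![x, y]
  simp only [pairing_fin_two, Fin.sum_univ_two, Fin.isValue, cons_val_zero, cons_val_one,
    cons_val_fin_one] at h
  have hdisc : discrim (M 0 0 - lam) (M 0 1 + M 1 0) (M 1 1 - lam) ≤ 0 :=
    discrim_le_zero fun x => by linarith [h x 1]
  rw [discrim] at hdisc
  rw [det_fin_two]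
  nlinarith [h 1 0, h 0 1, sq_nonneg (M 0 1 - M 1 0)]

theorem det_le_two_mul_sq (hM : ∀ i j, |M i j| ≤ Lam) : M.det ≤ 2 * Lam ^ 2 := by
  calc M.det ≤ |M.det| := le_abs_self _
    _ ≤ 2 * Lam ^ 2 := by simpa using det_le (abv := AbsoluteValue.abs) hM

theorem abs_inv_apply_le (hlam : 0 < lam) (hdet : lam ^ 2 ≤ M.det) (hM : ∀ i j, |M i j| ≤ Lam)
    (i j : Fin 2) : |M⁻¹ i j| ≤ Lam / lam ^ 2 := by
  have hdet₀ : 0 < M.det := (by positivity : (0 : ℝ) < lam ^ 2).trans_le hdet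
  have hadj : |M.adjugate i j| ≤ Lam := by
    rw [adjugate_fin_two]
    fin_cases i <;> fin_cases j <;> simp [hM]
  rw [inv_def, Ring.inverse_eq_inv, smul_apply, smul_eq_mul, abs_mul, abs_inv,
    abs_of_pos hdet₀, inv_mul_eq_div]
  exact div_le_div₀ ((abs_nonneg _).trans hadj) hadj (by positivity) hdet

/-- In dimension two the adjugate is `Rᵀ Mᵀ R` for the rotation `R (x, y) = (y, -x)`. -/
theorem det_mul_pairing_inv (hdet : M.det ≠ 0) (u : Fin 2 → ℝ) :
    M.det * M⁻¹.pairing u u = M.pairing ![u 1, -u 0] ![u 1, -u 0] := by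
  rw [inv_def, Ring.inverse_eq_inv, adjugate_fin_two]
  simp only [smul_of, smul_cons, smul_eq_mul, mul_neg, smul_empty, pairing_fin_two, of_apply,
    cons_val', cons_val_zero, cons_val_fin_one, cons_val_one, neg_mul, neg_neg]
  field_simp
  ring

theorem mul_sum_sq_le_det_mul_pairing_inv
    (hM : ∀ ξ : Fin 2 → ℝ, lam * ∑ i, ξ i ^ 2 ≤ M.pairing ξ ξ) (hdet : M.det ≠ 0)
    (u : Fin 2 → ℝ) : lam * ∑ i, u i ^ 2 ≤ M.det * M⁻¹.pairing u u := by
  rw [det_mul_pairing_inv hdet]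
  convert hM ![u 1, -u 0] using 2
  simp [Fin.sum_univ_two, add_comm]

theorem pairing_inv_self_nonneg (hlam : 0 < lam)
    (hM : ∀ ξ : Fin 2 → ℝ, lam * ∑ i, ξ i ^ 2 ≤ M.pairing ξ ξ) (u : Fin 2 → ℝ) :
    0 ≤ M⁻¹.pairing u u := by
  have hdet : 0 < M.det :=
    (by positivity : (0 : ℝ) < lam ^ 2).trans_le (sq_le_det_of_coercive hlam.le hM)
  refine nonneg_of_mul_nonneg_right ?_ hdet
  exact (by positivity : 0 ≤ lam * ∑ i, u i ^ 2).trans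
    (mul_sum_sq_le_det_mul_pairing_inv hM hdet.ne' u)

theorem sum_abs_le_sqrt_mul_sqrt_pairing_inv (hlam : 0 < lam)
    (hM : ∀ ξ : Fin 2 → ℝ, lam * ∑ i, ξ i ^ 2 ≤ M.pairing ξ ξ) (hbd : ∀ i j, |M i j| ≤ Lam)
    (u : Fin 2 → ℝ) : ∑ i, |u i| ≤ √(4 * Lam ^ 2 / lam) * √(M⁻¹.pairing u u) := by
  have hdet : 0 < M.det :=
    (by positivity : (0 : ℝ) < lam ^ 2).trans_le (sq_le_det_of_coercive hlam.le hM)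
  have hcoer := mul_sum_sq_le_det_mul_pairing_inv hM hdet.ne' u
  have hw := pairing_inv_self_nonneg hlam hM u
  have hcs : (∑ i, |u i|) ^ 2 ≤ 2 * ∑ i, u i ^ 2 := by
    simpa using sq_sum_le_card_mul_sum_sq (s := Finset.univ) (f := fun i => |u i|)
  rw [← Real.sqrt_mul (by positivity)]
  refine Real.le_sqrt_of_sq_le ?_
  rw [div_mul_eq_mul_div, le_div_iff₀ hlam]
  nlinarith [det_le_two_mul_sq hbd]

end Matrix

open Matrix

section Perturbation

variable {σ g : Matrix (Fin 2) (Fin 2) ℝ} {lam Lam δ δ₀ : ℝ}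

theorem abs_sqrt_det_sub_le (hlam : 0 < lam)
    (hσ : ∀ ξ : Fin 2 → ℝ, lam * ∑ i, ξ i ^ 2 ≤ σ.pairing ξ ξ) (hdet : |g.det - σ.det| ≤ δ) :
    |√σ.det - √g.det| ≤ δ / lam := by
  refine (Real.abs_sqrt_sub_sqrt_le_div hlam (sq_le_det_of_coercive hlam.le hσ)).trans ?_
  rw [abs_sub_comm]
  gcongr

theorem abs_mul_sqrt_det_sub_le (hlam : 0 < lam)
    (hσ : ∀ ξ : Fin 2 → ℝ, lam * ∑ i, ξ i ^ 2 ≤ σ.pairing ξ ξ) (hdet : |g.det - σ.det| ≤ δ)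
    (a : ℝ) : |a * √σ.det - a * √g.det| ≤ δ / lam ^ 2 * (|a| * √σ.det) := by
  have hs : lam ≤ √σ.det := Real.le_sqrt_of_sq_le (sq_le_det_of_coercive hlam.le hσ)
  have hδ : 0 ≤ δ := (abs_nonneg _).trans hdet
  rw [← mul_sub, abs_mul]
  calc |a| * |√σ.det - √g.det| ≤ |a| * (δ / lam) := by
        gcongr; exact abs_sqrt_det_sub_le hlam hσ hdet
    _ = δ / lam ^ 2 * (|a| * lam) := by field_simp
    _ ≤ δ / lam ^ 2 * (|a| * √σ.det) := by gcongr

theorem abs_inv_apply_mul_sqrt_det_sub_le (hlam : 0 < lam)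
    (hσ : ∀ ξ : Fin 2 → ℝ, lam * ∑ i, ξ i ^ 2 ≤ σ.pairing ξ ξ) (hbd : ∀ i j, |σ i j| ≤ Lam)
    (hinv : ∀ i j, |g⁻¹ i j - σ⁻¹ i j| ≤ δ) (hdet : |g.det - σ.det| ≤ δ) (hδ : δ ≤ δ₀)
    (i j : Fin 2) :
    |σ⁻¹ i j * √σ.det - g⁻¹ i j * √g.det| ≤
      δ * (√(2 * Lam ^ 2) + (Lam / lam ^ 2 + δ₀) / lam) := by
  have hδ_nonneg : 0 ≤ δ := (abs_nonneg _).trans hdet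
  have hs : |√σ.det| ≤ √(2 * Lam ^ 2) := by
    rw [abs_of_nonneg (Real.sqrt_nonneg _)]
    exact Real.sqrt_le_sqrt (det_le_two_mul_sq hbd)
  have hg : |g⁻¹ i j| ≤ Lam / lam ^ 2 + δ₀ := by
    have := abs_sub_abs_le_abs_sub (g⁻¹ i j) (σ⁻¹ i j)
    linarith [abs_inv_apply_le hlam (sq_le_det_of_coercive hlam.le hσ) hbd i j, hinv i j]
  calc |σ⁻¹ i j * √σ.det - g⁻¹ i j * √g.det|
      = |(σ⁻¹ i j - g⁻¹ i j) * √σ.det + g⁻¹ i j * (√σ.det - √g.det)| := by ring_nf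
    _ ≤ |σ⁻¹ i j - g⁻¹ i j| * |√σ.det| + |g⁻¹ i j| * |√σ.det - √g.det| := by
      rw [← abs_mul, ← abs_mul]; exact abs_add_le _ _
    _ ≤ δ * √(2 * Lam ^ 2) + (Lam / lam ^ 2 + δ₀) * (δ / lam) := by
      rw [abs_sub_comm]
      exact add_le_add (mul_le_mul (hinv i j) hs (abs_nonneg _) hδ_nonneg)
        (mul_le_mul hg (abs_sqrt_det_sub_le hlam hσ hdet) (abs_nonneg _)
          ((abs_nonneg _).trans hg))
    _ = δ * (√(2 * Lam ^ 2) + (Lam / lam ^ 2 + δ₀) / lam) := by ring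

theorem abs_pairing_inv_mul_sqrt_det_sub_le (hlam : 0 < lam)
    (hσ : ∀ ξ : Fin 2 → ℝ, lam * ∑ i, ξ i ^ 2 ≤ σ.pairing ξ ξ) (hbd : ∀ i j, |σ i j| ≤ Lam)
    (hinv : ∀ i j, |g⁻¹ i j - σ⁻¹ i j| ≤ δ) (hdet : |g.det - σ.det| ≤ δ) (hδ : δ ≤ δ₀)
    (u v : Fin 2 → ℝ) :
    |σ⁻¹.pairing u v * √σ.det - g⁻¹.pairing u v * √g.det| ≤
      δ * (√(2 * Lam ^ 2) + (Lam / lam ^ 2 + δ₀) / lam) * (4 * Lam ^ 2 / lam) *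
        (√(σ⁻¹.pairing u u) * √(σ⁻¹.pairing v v)) := by
  have hδ_nonneg : 0 ≤ δ := (abs_nonneg _).trans hdet
  have hδ₀_nonneg : 0 ≤ δ₀ := hδ_nonneg.trans hδ
  have hLam : 0 ≤ Lam := (abs_nonneg _).trans (hbd 0 0)
  have hk : √(4 * Lam ^ 2 / lam) * √(4 * Lam ^ 2 / lam) = 4 * Lam ^ 2 / lam :=
    Real.mul_self_sqrt (by positivity)
  rw [pairing_mul_sub_pairing_mul]
  refine (abs_pairing_le (abs_inv_apply_mul_sqrt_det_sub_le hlam hσ hbd hinv hdet hδ) u v).trans ?_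
  calc _ ≤ δ * (√(2 * Lam ^ 2) + (Lam / lam ^ 2 + δ₀) / lam) *
        (√(4 * Lam ^ 2 / lam) * √(σ⁻¹.pairing u u)) *
        (√(4 * Lam ^ 2 / lam) * √(σ⁻¹.pairing v v)) := by
        gcongr
        · exact sum_abs_le_sqrt_mul_sqrt_pairing_inv hlam hσ hbd u
        · exact sum_abs_le_sqrt_mul_sqrt_pairing_inv hlam hσ hbd v
    _ = _ := by
      linear_combination δ * (√(2 * Lam ^ 2) + (Lam / lam ^ 2 + δ₀) / lam) *
        √(σ⁻¹.pairing u u) * √(σ⁻¹.pairing v v) * hk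

theorem abs_pairing_inv_mul_sqrt_det_sub_le_young {p q t : ℝ} (hpq : p.HolderConjugate q)
    (ht : 0 < t) (hlam : 0 < lam)
    (hσ : ∀ ξ : Fin 2 → ℝ, lam * ∑ i, ξ i ^ 2 ≤ σ.pairing ξ ξ) (hbd : ∀ i j, |σ i j| ≤ Lam)
    (hinv : ∀ i j, |g⁻¹ i j - σ⁻¹ i j| ≤ δ) (hdet : |g.det - σ.det| ≤ δ) (hδ : δ ≤ δ₀)
    (a b : ℝ) (u v : Fin 2 → ℝ) :
    |σ⁻¹.pairing u v * √σ.det - g⁻¹.pairing u v * √g.det| ≤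
      δ * ((√(2 * Lam ^ 2) + (Lam / lam ^ 2 + δ₀) / lam) * (4 * Lam ^ 2 / lam) / lam) *
        (t ^ p * ((|a| ^ p + σ⁻¹.pairing u u ^ (p / 2)) * √σ.det) +
          (|b| ^ q + σ⁻¹.pairing v v ^ (q / 2)) * √σ.det / t ^ q) := by
  have hδ_nonneg : 0 ≤ δ := (abs_nonneg _).trans hdet
  have hδ₀_nonneg : 0 ≤ δ₀ := hδ_nonneg.trans hδ
  have hLam : 0 ≤ Lam := (abs_nonneg _).trans (hbd 0 0)
  refine (abs_pairing_inv_mul_sqrt_det_sub_le hlam hσ hbd hinv hdet hδ u v).trans ?_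
  have hyoung := Real.sqrt_mul_sqrt_le_young hpq ht hlam
    (Real.le_sqrt_of_sq_le (sq_le_det_of_coercive hlam.le hσ))
    (pairing_inv_self_nonneg hlam hσ u) (pairing_inv_self_nonneg hlam hσ v) a b
  calc _ ≤ δ * (√(2 * Lam ^ 2) + (Lam / lam ^ 2 + δ₀) / lam) * (4 * Lam ^ 2 / lam) *
        ((t ^ p * ((|a| ^ p + σ⁻¹.pairing u u ^ (p / 2)) * √σ.det) +
          (|b| ^ q + σ⁻¹.pairing v v ^ (q / 2)) * √σ.det / t ^ q) / lam) := by
        gcongr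
    _ = _ := by ring

end Perturbation

/-- Geometric perturbation estimates for lifted integrals.  Working in fixed local
coordinates (with coordinate measure `μ`), the surface `S` carries the metric `σ` and
the lifted polyhedral surface `S_h` the metric `g` with `g = σ + O(h²)`,
`g⁻¹ = σ⁻¹ + O(h²)`, `det g = det σ + O(h²)` (as provided by the graph representation
`|Dψ|_σ ≤ ch`, `|ψ| ≤ ch²`).  Then for `f ∈ W^{1,p}(S)`, `g₀ ∈ W^{1,p*}(S)` with
`1/p + 1/p* = 1`:
`∫_S ⟨Df,Dg₀⟩ = ∫_{S_h} ⟨Df̂,Dĝ₀⟩ + O(h²)‖f‖_{W^{1,p}}‖g₀‖_{W^{1,p*}}`, and for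
`f ∈ L¹(S)`: `∫_S f = ∫_{S_h} f̂ + O(h²)‖f‖_{L¹(S)}`. -/
theorem lifted_integral_perturbation
    {S : Type*} [MeasurableSpace S] (μ : Measure S)
    (σ g : S → Matrix (Fin 2) (Fin 2) ℝ)
    (lam Lam : ℝ) (hlam : 0 < lam) (hLam : 0 < Lam)
    (hell : ∀ x (ξ : Fin 2 → ℝ), lam * (∑ i, ξ i ^ 2) ≤ ∑ i, ∑ j, σ x i j * ξ i * ξ j)
    (hbd : ∀ x i j, |σ x i j| ≤ Lam)
    (c : ℝ) (hc : 0 < c) :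
    ∃ C : ℝ, 0 < C ∧ ∀ h : ℝ, 0 < h → h ≤ 1 →
      -- metric coefficients of `S_h` differ from those of `S` by `O(h²)`
      (∀ x i j, |g x i j - σ x i j| ≤ c * h ^ 2) →
      (∀ x i j, |(g x)⁻¹ i j - (σ x)⁻¹ i j| ≤ c * h ^ 2) →
      (∀ x, |(g x).det - (σ x).det| ≤ c * h ^ 2) →
      (∀ (p q : ℝ), 1 ≤ p → 1 ≤ q → 1 / p + 1 / q = 1 →
        ∀ (f g₀ : S → ℝ) (Df Dg₀ : S → Fin 2 → ℝ),
          Integrable (fun x => (∑ i, ∑ j, (σ x)⁻¹ i j * Df x i * Dg₀ x j) *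
            Real.sqrt (σ x).det) μ →
          Integrable (fun x => (∑ i, ∑ j, (g x)⁻¹ i j * Df x i * Dg₀ x j) *
            Real.sqrt (g x).det) μ →
          Integrable (fun x => (|f x| ^ p +
            (∑ i, ∑ j, (σ x)⁻¹ i j * Df x i * Df x j) ^ (p / 2)) * Real.sqrt (σ x).det) μ →
          Integrable (fun x => (|g₀ x| ^ q +
            (∑ i, ∑ j, (σ x)⁻¹ i j * Dg₀ x i * Dg₀ x j) ^ (q / 2)) * Real.sqrt (σ x).det) μ →
          |(∫ x, (∑ i, ∑ j, (σ x)⁻¹ i j * Df x i * Dg₀ x j) * Real.sqrt (σ x).det ∂μ) -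
            (∫ x, (∑ i, ∑ j, (g x)⁻¹ i j * Df x i * Dg₀ x j) * Real.sqrt (g x).det ∂μ)| ≤
            C * h ^ 2 *
              ((∫ x, (|f x| ^ p + (∑ i, ∑ j, (σ x)⁻¹ i j * Df x i * Df x j) ^ (p / 2)) *
                  Real.sqrt (σ x).det ∂μ) ^ (1 / p)) *
              ((∫ x, (|g₀ x| ^ q + (∑ i, ∑ j, (σ x)⁻¹ i j * Dg₀ x i * Dg₀ x j) ^ (q / 2)) *
                  Real.sqrt (σ x).det ∂μ) ^ (1 / q))) ∧
      (∀ f : S → ℝ,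
        Integrable (fun x => f x * Real.sqrt (σ x).det) μ →
        Integrable (fun x => f x * Real.sqrt (g x).det) μ →
        Integrable (fun x => |f x| * Real.sqrt (σ x).det) μ →
        |(∫ x, f x * Real.sqrt (σ x).det ∂μ) - (∫ x, f x * Real.sqrt (g x).det ∂μ)| ≤
          C * h ^ 2 * ∫ x, |f x| * Real.sqrt (σ x).det ∂μ) := by
  set K := (√(2 * Lam ^ 2) + (Lam / lam ^ 2 + c) / lam) * (4 * Lam ^ 2 / lam) / lam
  refine ⟨2 * c * K + c / lam ^ 2, by positivity, fun h hh₀ hh₁ _ hinv hdet => ⟨?_, ?_⟩⟩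
  · intro p q hp hq hpq f g₀ Df Dg₀ hA hB hP hQ
    have hpq' : p.HolderConjugate q := ⟨by simpa using hpq, by linarith, by linarith⟩
    have hδ : c * h ^ 2 ≤ c := mul_le_of_le_one_right hc.le (pow_le_one₀ hh₀.le hh₁)
    have hdens {r : ℝ} (a : S → ℝ) (u : S → Fin 2 → ℝ) (x : S) :
        0 ≤ (|a x| ^ r + (σ x)⁻¹.pairing (u x) (u x) ^ (r / 2)) * √(σ x).det := by
      have := pairing_inv_self_nonneg hlam (hell x) (u x)
      positivity
    rw [← integral_sub hA hB]
    refine (abs_integral_le_of_forall_young hpq' (by positivity) hP hQ (hdens f Df) (hdens g₀ Dg₀)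
      fun t ht x => abs_pairing_inv_mul_sqrt_det_sub_le_young hpq' ht hlam (hell x) (hbd x)
        (hinv x) (hdet x) hδ (f x) (g₀ x) (Df x) (Dg₀ x)).trans ?_
    have hX := Real.rpow_nonneg (integral_nonneg (μ := μ) (hdens (r := p) f Df)) (1 / p)
    have hY := Real.rpow_nonneg (integral_nonneg (μ := μ) (hdens (r := q) g₀ Dg₀)) (1 / q)
    refine mul_le_mul_of_nonneg_right (mul_le_mul_of_nonneg_right ?_ hX) hY
    have : 0 ≤ c / lam ^ 2 * h ^ 2 := by positivity
    linear_combination this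
  · intro f hA hB hF
    rw [← integral_sub hA hB]
    have : 0 ≤ 2 * c * K * h ^ 2 * ∫ x, |f x| * √(σ x).det ∂μ := by positivity
    calc _ = ‖∫ x, (f x * √(σ x).det - f x * √(g x).det) ∂μ‖ := (Real.norm_eq_abs _).symm
      _ ≤ ∫ x, c * h ^ 2 / lam ^ 2 * (|f x| * √(σ x).det) ∂μ :=
        norm_integral_le_of_norm_le (hF.const_mul _)
          (ae_of_all _ fun x => abs_mul_sqrt_det_sub_le hlam (hell x) (hdet x) (f x))
      _ = c * h ^ 2 / lam ^ 2 * ∫ x, |f x| * √(σ x).det ∂μ := integral_const_mul _ _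
      _ ≤ _ := by linear_combination this
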